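/- arXiv:1807.04570 — 5 statements merged into one kernel-verified Lean document; each statement's English description precedes it below -/
import Mathlib

section
/- For a periodic sequence a ∈ ℝ^{2N+1} with mesh size h > 0, ∑_{j=0}^{2N} (δ²ₓ a_j)² = (4/h²) ∑_{j=0}^{2N} [(δ⁺ₓ a_j)² - (δ⁰ₓ a_j)²], where δ⁰ₓ v_j = (v_{j+1} - v_{j-1})/(2h). -/
/-- Identity relating the discrete second difference to forward and centered differences. -/
theorem stmt_1 (N : ℕ) (hN : 0 < N) (h : ℝ) (hh : 0 < h)
    (a : ZMod (2 * N + 1) → ℝ) :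
    ∑ j : ZMod (2 * N + 1), ((a (j + 1) - 2 * a j + a (j - 1)) / h ^ 2) ^ 2 =
      (4 / h ^ 2) * ∑ j : ZMod (2 * N + 1),
        (((a (j + 1) - a j) / h) ^ 2 - ((a (j + 1) - a (j - 1)) / (2 * h)) ^ 2) := by
  have hne : h ≠ 0 := ne_of_gt hh
  have key : ∑ j : ZMod (2 * N + 1), (a (j + 1) - a j) ^ 2
      = ∑ j : ZMod (2 * N + 1), (a j - a (j - 1)) ^ 2 := by
    apply Fintype.sum_equiv (Equiv.addRight (1 : ZMod (2 * N + 1)))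
    intro j
    simp
  rw [Finset.mul_sum]
  have step : ∀ j : ZMod (2 * N + 1),
      ((a (j + 1) - 2 * a j + a (j - 1)) / h ^ 2) ^ 2
        = (4 / h ^ 2 * (((a (j + 1) - a j) / h) ^ 2 - ((a (j + 1) - a (j - 1)) / (2 * h)) ^ 2))
          - (2 / h ^ 4) * ((a (j + 1) - a j) ^ 2 - (a j - a (j - 1)) ^ 2) := by
    intro j
    field_simp
    ring
  calc ∑ j : ZMod (2 * N + 1), ((a (j + 1) - 2 * a j + a (j - 1)) / h ^ 2) ^ 2
      = ∑ j : ZMod (2 * N + 1),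
          ((4 / h ^ 2 * (((a (j + 1) - a j) / h) ^ 2 - ((a (j + 1) - a (j - 1)) / (2 * h)) ^ 2))
            - (2 / h ^ 4) * ((a (j + 1) - a j) ^ 2 - (a j - a (j - 1)) ^ 2)) :=
        Finset.sum_congr rfl (fun j _ => step j)
    _ = (∑ j : ZMod (2 * N + 1),
          4 / h ^ 2 * (((a (j + 1) - a j) / h) ^ 2 - ((a (j + 1) - a (j - 1)) / (2 * h)) ^ 2))
        - (2 / h ^ 4) * ((∑ j : ZMod (2 * N + 1), (a (j + 1) - a j) ^ 2)
            - ∑ j : ZMod (2 * N + 1), (a j - a (j - 1)) ^ 2) := by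
        rw [Finset.sum_sub_distrib, ← Finset.mul_sum, ← Finset.mul_sum, Finset.sum_sub_distrib, Finset.sum_sub_distrib]
    _ = ∑ j : ZMod (2 * N + 1),
          4 / h ^ 2 * (((a (j + 1) - a j) / h) ^ 2 - ((a (j + 1) - a (j - 1)) / (2 * h)) ^ 2) := by
        rw [key, sub_self, mul_zero, sub_zero]
end

section
/- For a periodic sequence a ∈ ℝ^{2N+1} with mesh size h > 0, ∑_{j=0}^{2N} a_j a_{j+1} δ⁺ₓ a_j = -(h²/3) ∑_{j=0}^{2N} (δ⁺ₓ a_j)³. -/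
/-- Cubic identity for the forward difference of a periodic sequence. -/
theorem stmt_2 (N : ℕ) (hN : 0 < N) (h : ℝ) (hh : 0 < h)
    (a : ZMod (2 * N + 1) → ℝ) :
    ∑ j : ZMod (2 * N + 1), a j * a (j + 1) * ((a (j + 1) - a j) / h) =
      -(h ^ 2 / 3) * ∑ j : ZMod (2 * N + 1), ((a (j + 1) - a j) / h) ^ 3 := by
  have hh' : h ≠ 0 := hh.ne'
  have key : ∑ j : ZMod (2 * N + 1), a (j + 1) ^ 3 = ∑ j : ZMod (2 * N + 1), a j ^ 3 :=
    Fintype.sum_equiv (Equiv.addRight (1 : ZMod (2 * N + 1))) _ _ (fun j => rfl)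
  have h2 : ∑ j : ZMod (2 * N + 1), a j * a (j + 1) * (a (j + 1) - a j) =
      -(1 / 3) * ∑ j : ZMod (2 * N + 1), (a (j + 1) - a j) ^ 3 := by
    have e : ∀ j : ZMod (2 * N + 1), a j * a (j + 1) * (a (j + 1) - a j) =
        (a (j + 1) ^ 3 - a j ^ 3 - (a (j + 1) - a j) ^ 3) / 3 := fun j => by ring
    rw [Finset.sum_congr rfl fun j _ => e j, ← Finset.sum_div, Finset.sum_sub_distrib, Finset.sum_sub_distrib, key]
    ring
  have l : ∑ j : ZMod (2 * N + 1), a j * a (j + 1) * ((a (j + 1) - a j) / h) =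
      (∑ j : ZMod (2 * N + 1), a j * a (j + 1) * (a (j + 1) - a j)) / h := by
    rw [Finset.sum_div]; exact Finset.sum_congr rfl fun j _ => by ring
  have r : ∑ j : ZMod (2 * N + 1), ((a (j + 1) - a j) / h) ^ 3 =
      (∑ j : ZMod (2 * N + 1), (a (j + 1) - a j) ^ 3) / h ^ 3 := by
    rw [Finset.sum_div]; exact Finset.sum_congr rfl fun j _ => by rw [div_pow]
  rw [l, r, h2]
  field_simp
end

section
/- For a periodic sequence a ∈ ℝ^{2N+1} with mesh size h > 0, ∑_{j=0}^{2N} a_{j-1} a_{j+1} δ⁰ₓ a_j = -(4h²/3) ∑_{j=0}^{2N} (δ⁰ₓ a_j)³, where δ⁰ₓ a_j = (a_{j+1} - a_{j-1})/(2h). -/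
/-- Cubic identity for the centered difference of a periodic sequence. -/
theorem stmt_3 (N : ℕ) (hN : 0 < N) (h : ℝ) (hh : 0 < h)
    (a : ZMod (2 * N + 1) → ℝ) :
    ∑ j : ZMod (2 * N + 1), a (j - 1) * a (j + 1) * ((a (j + 1) - a (j - 1)) / (2 * h)) =
      -(4 * h ^ 2 / 3) * ∑ j : ZMod (2 * N + 1), ((a (j + 1) - a (j - 1)) / (2 * h)) ^ 3 := by
  have hne : h ≠ 0 := ne_of_gt hh
  have key : ∑ j : ZMod (2 * N + 1), a (j + 1) ^ 3
      = ∑ j : ZMod (2 * N + 1), a (j - 1) ^ 3 := by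
    apply Fintype.sum_equiv (Equiv.addRight (2 : ZMod (2 * N + 1)))
    intro j
    simp only [Equiv.coe_addRight]
    ring_nf
  have expand : ∀ j : ZMod (2 * N + 1),
      a (j - 1) * a (j + 1) * ((a (j + 1) - a (j - 1)) / (2 * h))
        = (a (j + 1) ^ 3 - a (j - 1) ^ 3) / (6 * h)
          + (-(4 * h ^ 2 / 3)) * ((a (j + 1) - a (j - 1)) / (2 * h)) ^ 3 := by
    intro j
    field_simp
    ring
  rw [Finset.sum_congr rfl fun j _ => expand j, Finset.sum_add_distrib,
    ← Finset.sum_div, Finset.sum_sub_distrib, key, sub_self, zero_div, zero_add,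
    ← Finset.mul_sum]
end

section
/- For periodic sequences a, b ∈ ℝ^{2N+1} with mesh size h > 0, ∑_{j=0}^{2N} (δ²ₓ a_j)(δ⁰ₓ (ab)_j) = -(1/h²) ∑_{j=0}^{2N} a_j a_{j+1} δ⁺ₓ b_j + (1/h²) ∑_{j=0}^{2N} a_{j-1} a_{j+1} δ⁰ₓ b_j, where (ab)_j = a_j b_j. -/
/-- Identity for the second difference paired with the centered difference of a product. -/
theorem stmt_4 (N : ℕ) (hN : 0 < N) (h : ℝ) (hh : 0 < h)
    (a b : ZMod (2 * N + 1) → ℝ) :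
    ∑ j : ZMod (2 * N + 1),
        ((a (j + 1) - 2 * a j + a (j - 1)) / h ^ 2) *
          ((a (j + 1) * b (j + 1) - a (j - 1) * b (j - 1)) / (2 * h)) =
      -(1 / h ^ 2) * ∑ j : ZMod (2 * N + 1), a j * a (j + 1) * ((b (j + 1) - b j) / h)
        + (1 / h ^ 2) * ∑ j : ZMod (2 * N + 1),
            a (j - 1) * a (j + 1) * ((b (j + 1) - b (j - 1)) / (2 * h)) := by
  have h0 : h ≠ 0 := ne_of_gt hh
  have key : ∀ f : ZMod (2 * N + 1) → ℝ, ∑ j, f (j + 1) = ∑ j, f j := fun f =>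
    Fintype.sum_equiv (Equiv.addRight 1) _ _ fun j => rfl
  have key' : ∀ f : ZMod (2 * N + 1) → ℝ, ∑ j, f (j - 1) = ∑ j, f j := fun f =>
    Fintype.sum_equiv (Equiv.subRight 1) _ _ fun j => rfl
  rw [← sub_eq_zero, Finset.mul_sum, Finset.mul_sum, ← Finset.sum_add_distrib,
    ← Finset.sum_sub_distrib]
  set Q : ZMod (2 * N + 1) → ℝ := fun j => a j ^ 2 * b j / (2 * h ^ 3) with hQ
  set R : ZMod (2 * N + 1) → ℝ := fun j => a j * a (j - 1) * b (j - 1) / h ^ 3 with hR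
  calc ∑ j : ZMod (2 * N + 1),
        (((a (j + 1) - 2 * a j + a (j - 1)) / h ^ 2) *
          ((a (j + 1) * b (j + 1) - a (j - 1) * b (j - 1)) / (2 * h)) -
        (-(1 / h ^ 2) * (a j * a (j + 1) * ((b (j + 1) - b j) / h))
          + 1 / h ^ 2 * (a (j - 1) * a (j + 1) * ((b (j + 1) - b (j - 1)) / (2 * h)))))
      = ∑ j : ZMod (2 * N + 1),
        ((Q (j + 1) - Q j) + (Q j - Q (j - 1)) + (R j - R (j + 1))) := by
        refine Finset.sum_congr rfl fun j _ => ?_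
        simp only [hQ, hR]
        field_simp
        ring
    _ = 0 := by
        simp only [Finset.sum_add_distrib, Finset.sum_sub_distrib, key, key']
        ring
end

section
/- For a periodic sequence η ∈ ℝ^{2N+1}, ∑_{j=0}^{2N} η_j ((η_{j+1})² - (η_{j-1})²) = -(1/3) ∑_{j=0}^{2N} (η_{j+1} - η_j)³. Equivalently, with δ⁰ₓ and δ⁺ₓ defined relative to mesh h, -τ ⟨η, δ⁰ₓ(η²)⟩_N = (τ h³/6) ∑_j (δ⁺ₓ η_j)³ where ⟨u,v⟩_N = h ∑_j u_j v_j and (η²)_j = η_j². -/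
open Finset

lemma shift_sum {n : ℕ} [NeZero n] (f : ZMod n → ℝ) :
    ∑ j : ZMod n, f (j + 1) = ∑ j : ZMod n, f j :=
  Fintype.sum_equiv (Equiv.addRight 1) _ _ (fun _ => rfl)

/-- Cubic telescoping identity and its inner-product form. -/
theorem stmt_5 (N : ℕ) (hN : 0 < N) (h τ : ℝ) (hh : 0 < h) (hτ : 0 < τ)
    (η : ZMod (2 * N + 1) → ℝ) :
    (∑ j : ZMod (2 * N + 1), η j * ((η (j + 1)) ^ 2 - (η (j - 1)) ^ 2) =
      -(1 / 3) * ∑ j : ZMod (2 * N + 1), (η (j + 1) - η j) ^ 3) ∧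
    (-(τ * (h * ∑ j : ZMod (2 * N + 1),
        η j * (((η (j + 1)) ^ 2 - (η (j - 1)) ^ 2) / (2 * h)))) =
      (τ * h ^ 3 / 6) * ∑ j : ZMod (2 * N + 1), ((η (j + 1) - η j) / h) ^ 3) := by
  set g : ZMod (2 * N + 1) → ℝ := fun j => η j * η (j - 1) ^ 2 + (1/3) * η j ^ 3 with hg
  have tel : ∑ j : ZMod (2 * N + 1), (g (j + 1) - g j) = 0 := by
    rw [Finset.sum_sub_distrib, shift_sum g, sub_self]
  have e1 : (∑ j : ZMod (2 * N + 1), η j * ((η (j + 1)) ^ 2 - (η (j - 1)) ^ 2))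
      + (1/3) * ∑ j : ZMod (2 * N + 1), (η (j + 1) - η j) ^ 3
      = ∑ j : ZMod (2 * N + 1), (g (j + 1) - g j) := by
    rw [Finset.mul_sum, ← Finset.sum_add_distrib]
    refine Finset.sum_congr rfl fun j _ => ?_
    simp only [hg, add_sub_cancel_right]
    ring
  have key : ∑ j : ZMod (2 * N + 1), η j * ((η (j + 1)) ^ 2 - (η (j - 1)) ^ 2) =
      -(1 / 3) * ∑ j : ZMod (2 * N + 1), (η (j + 1) - η j) ^ 3 := by
    rw [tel] at e1; linarith
  refine ⟨key, ?_⟩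
  have r1 : ∑ j : ZMod (2 * N + 1),
      η j * (((η (j + 1)) ^ 2 - (η (j - 1)) ^ 2) / (2 * h))
      = (∑ j : ZMod (2 * N + 1), η j * ((η (j + 1)) ^ 2 - (η (j - 1)) ^ 2)) / (2 * h) := by
    rw [Finset.sum_div]
    exact Finset.sum_congr rfl fun j _ => (mul_div_assoc _ _ _).symm
  have r2 : ∑ j : ZMod (2 * N + 1), ((η (j + 1) - η j) / h) ^ 3
      = (∑ j : ZMod (2 * N + 1), (η (j + 1) - η j) ^ 3) / h ^ 3 := by
    rw [Finset.sum_div]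
    exact Finset.sum_congr rfl fun j _ => div_pow _ _ _
  rw [r1, r2, key]
  field_simp
  ring
end
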